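/- Let {g_k} be a sequence in the group N of n×n real upper triangular unipotent matrices satisfying the dichotomy condition and such that 𝒜(A,{g_k}) = {0}. For 0 < δ < 1 and g ∈ SL(n,ℝ), let Ω_{g,δ} = {t ∈ Lie(A) : ω_I(t) ≥ ln δ − ln‖g·e_I‖ for every nonempty I ⊆ [n]}, a bounded convex polytope in Lie(A). Then lim_{k→∞} Area(∂Ω_{g_k,δ}) / Vol(Ω_{g_k,δ}) = 0, where Vol is the Lebesgue measure on the hyperplane Lie(A) ≅ {t ∈ ℝⁿ : Σt_i = 0} and Area(∂·) is the outer Minkowski content of the boundary within this hyperplane. -/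

import Mathlib

open MeasureTheory Filter Topology Pointwise

attribute [local instance] Matrix.frobeniusNormedAddCommGroup

/-- `u` is an upper triangular unipotent matrix. -/
def IsUpperUnip {n : ℕ} (u : Matrix (Fin n) (Fin n) ℝ) : Prop :=
  (∀ i : Fin n, u i i = 1) ∧ ∀ i j : Fin n, j < i → u i j = 0

/-- The coordinate of `g·e_I` on the standard wedge basis vector `e_J` of `⋀^{|I|} ℝⁿ`:
the minor of `g` with rows `J` and columns `I` (and `0` if `J.card ≠ I.card`). -/
noncomputable def wedgeCoord {n : ℕ} (g : Matrix (Fin n) (Fin n) ℝ)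
    (J I : Finset (Fin n)) : ℝ :=
  if h : J.card = I.card then
    (g.submatrix (fun a : Fin I.card => (J.orderIsoOfFin h a : Fin n))
      (fun b : Fin I.card => (I.orderIsoOfFin rfl b : Fin n))).det
  else 0

/-- The norm `‖g·e_I‖` on `⋀^{|I|} ℝⁿ` induced by the Euclidean norm on `ℝⁿ`. -/
noncomputable def wedgeNorm {n : ℕ} (g : Matrix (Fin n) (Fin n) ℝ) (I : Finset (Fin n)) : ℝ :=
  Real.sqrt (∑ J ∈ Finset.univ.filter fun J : Finset (Fin n) => J.card = I.card,
    (wedgeCoord g J I) ^ 2)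

/-- The hyperplane `Lie(A) = {t ∈ ℝⁿ : Σ tᵢ = 0}`, as a subspace of Euclidean `ℝⁿ`;
it carries the induced Euclidean structure and the associated Lebesgue measure. -/
def LieA (n : ℕ) : Submodule ℝ (EuclideanSpace ℝ (Fin n)) where
  carrier := {t | ∑ i, t i = 0}
  add_mem' := by intro a b ha hb; simp_all [Finset.sum_add_distrib]
  zero_mem' := by simp
  smul_mem' := by intro c a ha; simp_all [← Finset.mul_sum]

noncomputable instance (n : ℕ) : MeasurableSpace (LieA n) := borel _
instance (n : ℕ) : BorelSpace (LieA n) := ⟨rfl⟩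

/-- The convex polytope `Ω_{g,δ} ⊆ Lie(A)` determined by
`ω_I(t) ≥ ln δ − ln ‖g·e_I‖` for all nonempty `I ⊆ {1,…,n}`. -/
noncomputable def OmegaSet {n : ℕ} (g : Matrix (Fin n) (Fin n) ℝ) (δ : ℝ) :
    Set (LieA n) :=
  {t | ∀ I : Finset (Fin n), I.Nonempty →
    Real.log δ - Real.log (wedgeNorm g I) ≤ ∑ i ∈ I, (t : EuclideanSpace ℝ (Fin n)) i}

/-!
Call `i → j` (`i < j`) a pattern edge when some `g k i j ≠ 0`. Since `𝒜(A, {g_k}) = {0}`,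
an edge leaves every proper nonempty down-set `I` of this directed graph, so the vector
`b ∈ Lie(A)` of out-degrees minus in-degrees has `ω_I(b) ≥ 1` on such `I`. For any other
nonempty `I`, some minor of `g_k` on the columns `I` is `± g_k(j, i)` for a pattern edge
`j → i`, so `‖g_k·e_I‖ → ∞`. Hence `Ω_{g_k,δ}` eventually contains balls, centred on the ray
through `b`, of any radius `R`; and a convex body containing a ball of radius `R` has
`Area(∂Ω) ≤ (dim / R) · Vol(Ω)`, because its `ε`-neighbourhood lies in its image under a
homothety of ratio `1 + ε / R`.
-/

theorem Matrix.abs_det_submatrix_eq_of_range_eq {ι κ R : Type*} [Fintype ι] [DecidableEq ι]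
    [CommRing R] [LinearOrder R] [IsStrictOrderedRing R] (M : Matrix κ κ R) {r r' : ι → κ}
    (hr : Function.Injective r) (hr' : Function.Injective r') (h : Set.range r = Set.range r')
    (c : ι → κ) : |(M.submatrix r c).det| = |(M.submatrix r' c).det| := by
  let σ : Equiv.Perm ι :=
    (Equiv.ofInjective r hr).trans ((Equiv.setCongr h).trans (Equiv.ofInjective r' hr').symm)
  have hσ : ∀ a, r' (σ a) = r a := fun a => by
    simp only [σ, Equiv.trans_apply, Equiv.apply_ofInjective_symm, Equiv.setCongr_apply,
      Equiv.ofInjective_apply]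
  have hM : M.submatrix r c = (M.submatrix r' c).submatrix σ id := by
    ext a b; simp [hσ]
  rw [hM, Matrix.det_permute, abs_mul, ← Int.cast_abs, Int.abs_eq_natAbs, Int.units_natAbs,
    Nat.cast_one, Int.cast_one, one_mul]

theorem Matrix.mul_diagonal_eq_diagonal_mul {ι R : Type*} [Fintype ι] [DecidableEq ι]
    [CommSemiring R] (M : Matrix ι ι R) {t : ι → R} (h : ∀ a b, M a b ≠ 0 → t a = t b) :
    M * Matrix.diagonal t = Matrix.diagonal t * M := by
  ext a b
  rw [Matrix.mul_diagonal, Matrix.diagonal_mul]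
  by_cases hab : M a b = 0
  · simp [hab]
  · rw [h a b hab, mul_comm]

theorem IsUpperUnip.det_eq_one {n : ℕ} {u : Matrix (Fin n) (Fin n) ℝ} (hu : IsUpperUnip u) :
    u.det = 1 := by
  rw [Matrix.det_of_isUpperTriangular hu.2]
  simp [hu.1]

theorem wedgeCoord_self {n : ℕ} {u : Matrix (Fin n) (Fin n) ℝ} (hu : IsUpperUnip u)
    (I : Finset (Fin n)) : wedgeCoord u I I = 1 := by
  rw [wedgeCoord, dif_pos rfl, Matrix.det_of_isUpperTriangular]
  · exact Finset.prod_eq_one fun a _ => hu.1 _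
  · intro a b hba
    exact hu.2 _ _ ((I.orderIsoOfFin rfl).strictMono hba)

theorem abs_wedgeCoord_le_wedgeNorm {n : ℕ} (u : Matrix (Fin n) (Fin n) ℝ)
    {J I : Finset (Fin n)} (h : J.card = I.card) : |wedgeCoord u J I| ≤ wedgeNorm u I := by
  rw [wedgeNorm, ← Real.sqrt_sq_eq_abs]
  exact Real.sqrt_le_sqrt <| Finset.single_le_sum (f := fun J => wedgeCoord u J I ^ 2)
    (fun J _ => sq_nonneg _) (Finset.mem_filter.mpr ⟨Finset.mem_univ _, h⟩)

theorem one_le_wedgeNorm {n : ℕ} {u : Matrix (Fin n) (Fin n) ℝ} (hu : IsUpperUnip u)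
    (I : Finset (Fin n)) : 1 ≤ wedgeNorm u I := by
  simpa [wedgeCoord_self hu] using abs_wedgeCoord_le_wedgeNorm u (rfl : I.card = I.card)

/-- Swapping `i` for `j` in the rows of the principal minor on `I` gives a matrix that is
still upper triangular, with `u j i` as its only non-unit diagonal entry. -/
theorem abs_wedgeCoord_insert_erase {n : ℕ} {u : Matrix (Fin n) (Fin n) ℝ} (hu : IsUpperUnip u)
    {I : Finset (Fin n)} {i j : Fin n} (hj : j ∉ I) (hi : i ∈ I) (hji : j < i)
    (hgap : ∀ b ∈ I, j < b → b < i → u j b = 0) :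
    |wedgeCoord u (insert j (I.erase i)) I| = |u j i| := by
  have hcard : (insert j (I.erase i)).card = I.card := by
    rw [Finset.card_insert_of_notMem (fun h => hj (Finset.mem_of_mem_erase h)),
      Finset.card_erase_add_one hi]
  set c := I.orderEmbOfFin rfl
  have hcI : ∀ a, c a ∈ I := I.orderEmbOfFin_mem rfl
  have hrange : Set.range ((insert j (I.erase i)).orderEmbOfFin hcard) =
      Set.range (Equiv.swap i j ∘ c) := by
    rw [Finset.range_orderEmbOfFin, Set.range_comp, Finset.range_orderEmbOfFin]
    ext x
    simp only [Set.mem_image, Finset.coe_insert, Finset.coe_erase, Set.mem_insert_iff,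
      Set.mem_sdiff, Finset.mem_coe, Set.mem_singleton_iff]
    grind
  have htri : (u.submatrix (Equiv.swap i j ∘ c) c).BlockTriangular id := by
    intro a b hba
    have hcb : c b < c a := c.strictMono hba
    simp only [Matrix.submatrix_apply, Function.comp_apply, Equiv.swap_apply_def,
      if_neg (ne_of_mem_of_not_mem (hcI a) hj)]
    split_ifs with hca
    · rcases lt_trichotomy j (c b) with h | h | h
      · exact hgap _ (hcI b) h (hca ▸ hcb)
      · exact absurd (h ▸ hcI b) hj
      · exact hu.2 _ _ h
    · exact hu.2 _ _ hcb
  obtain ⟨a₀, ha₀⟩ : i ∈ Set.range c := by rwa [Finset.range_orderEmbOfFin]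
  rw [wedgeCoord, dif_pos hcard]
  simp only [Finset.coe_orderIsoOfFin_apply]
  rw [Matrix.abs_det_submatrix_eq_of_range_eq u (RelEmbedding.injective _)
    ((Equiv.swap i j).injective.comp c.injective) hrange,
    Matrix.det_of_isUpperTriangular htri, Fintype.prod_eq_single a₀]
  · simp [ha₀]
  · intro a ha
    have hca : c a ≠ i := fun h => ha (c.injective (h.trans ha₀.symm))
    simp [Equiv.swap_apply_of_ne_of_ne hca (ne_of_mem_of_not_mem (hcI a) hj), hu.1]

section Balance

variable {ι : Type*} [DecidableEq ι]

def edgeBalance (E : Finset (ι × ι)) (i : ι) : ℝ :=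
  ∑ p ∈ E, ((if p.1 = i then 1 else 0) - (if p.2 = i then 1 else 0))

theorem sum_edgeBalance (E : Finset (ι × ι)) (I : Finset ι) :
    ∑ i ∈ I, edgeBalance E i =
      ∑ p ∈ E, ((if p.1 ∈ I then 1 else 0) - (if p.2 ∈ I then 1 else 0) : ℝ) := by
  simp only [edgeBalance]
  rw [Finset.sum_comm]
  simp [Finset.sum_sub_distrib]

theorem sum_edgeBalance_univ [Fintype ι] (E : Finset (ι × ι)) :
    ∑ i, edgeBalance E i = 0 := by
  simp [sum_edgeBalance]

/-- On a set that no edge enters, every edge contributes `0` or `1` to the balance. -/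
theorem one_le_sum_edgeBalance {E : Finset (ι × ι)} {I : Finset ι}
    (hin : ∀ p ∈ E, p.2 ∈ I → p.1 ∈ I) (hout : ∃ p ∈ E, p.1 ∈ I ∧ p.2 ∉ I) :
    1 ≤ ∑ i ∈ I, edgeBalance E i := by
  obtain ⟨p, hp, hp1, hp2⟩ := hout
  rw [sum_edgeBalance, ← Finset.add_sum_erase E _ hp]
  have hrest :
      0 ≤ ∑ q ∈ E.erase p, ((if q.1 ∈ I then 1 else 0) - (if q.2 ∈ I then 1 else 0) : ℝ) :=
    Finset.sum_nonneg fun q hq => by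
      by_cases h2 : q.2 ∈ I
      · simp [h2, hin q (Finset.mem_of_mem_erase hq) h2]
      · split_ifs <;> norm_num
  simp only [if_pos hp1, if_neg hp2]
  linarith

end Balance

section Pattern

variable {n : ℕ} (g : ℕ → Matrix (Fin n) (Fin n) ℝ)

def IsPatternEdge (i j : Fin n) : Prop := i < j ∧ ∃ k, g k i j ≠ 0

def IsPatternDownset (I : Finset (Fin n)) : Prop :=
  ∀ a b, IsPatternEdge g a b → b ∈ I → a ∈ I

variable {g}

/-- If no pattern edge left `I`, the traceless diagonal matrix `n·1_I - |I|` would commute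
with every `g k`, contradicting `𝒜(A, {g_k}) = {0}`. -/
theorem exists_patternEdge_of_isPatternDownset (hg : ∀ k, IsUpperUnip (g k))
    (htriv : ∀ t : Fin n → ℝ, (∑ i, t i) = 0 →
      Bornology.IsBounded (Set.range fun k => g k * Matrix.diagonal t * (g k)⁻¹) → t = 0)
    {I : Finset (Fin n)} (hI : IsPatternDownset g I) (hne : I.Nonempty)
    (huniv : I ≠ Finset.univ) : ∃ a ∈ I, ∃ b ∉ I, IsPatternEdge g a b := by
  by_contra! hno
  let t : Fin n → ℝ := fun x => n * (if x ∈ I then 1 else 0) - I.card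
  have hsum : ∑ i, t i = 0 := by
    simp [t, Finset.sum_sub_distrib, mul_comm]
  have hcomm : ∀ k, g k * Matrix.diagonal t = Matrix.diagonal t * g k := fun k =>
    (g k).mul_diagonal_eq_diagonal_mul fun a b hab => by
      rcases lt_trichotomy a b with h | rfl | h
      · have hedge : IsPatternEdge g a b := ⟨h, k, hab⟩
        have : a ∈ I ↔ b ∈ I :=
          ⟨fun ha => by_contra fun hb => hno a ha b hb hedge, hI a b hedge⟩
        simp [t, this]
      · rfl
      · exact absurd ((hg k).2 a b h) hab
  have hconj : ∀ k, g k * Matrix.diagonal t * (g k)⁻¹ = Matrix.diagonal t := fun k => by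
    rw [hcomm k, Matrix.mul_assoc, Matrix.mul_nonsing_inv _ (by simp [(hg k).det_eq_one]),
      Matrix.mul_one]
  have ht : t = 0 := htriv t hsum <| (Bornology.isBounded_singleton (x := Matrix.diagonal t)).subset
    (by rintro _ ⟨k, rfl⟩; exact hconj k)
  obtain ⟨i, hi⟩ := hne
  have hcard : I.card < n := by
    simpa using Finset.card_lt_card (Finset.ssubset_univ_iff.mpr huniv)
  have hti : t i = 0 := by rw [ht, Pi.zero_apply]
  simp only [t, if_pos hi, mul_one] at hti
  exact hcard.ne' (by exact_mod_cast (by linarith : (n : ℝ) = I.card))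

theorem tendsto_wedgeNorm_atTop_of_not_isPatternDownset (hg : ∀ k, IsUpperUnip (g k))
    (hdich : ∀ i j : Fin n, i < j →
      (∀ k, g k i j = 0) ∨ Tendsto (fun k => |g k i j|) atTop atTop)
    {I : Finset (Fin n)} (hI : ¬ IsPatternDownset g I) :
    Tendsto (fun k => wedgeNorm (g k) I) atTop atTop := by
  classical
  simp only [IsPatternDownset, not_forall] at hI
  obtain ⟨j, b, hjb, hb, hj⟩ := hI
  have hne : (I.filter (IsPatternEdge g j)).Nonempty := ⟨b, Finset.mem_filter.mpr ⟨hb, hjb⟩⟩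
  set i := (I.filter (IsPatternEdge g j)).min' hne
  obtain ⟨hi, hji⟩ := Finset.mem_filter.mp (Finset.min'_mem _ hne)
  have hgap : ∀ k, ∀ c ∈ I, j < c → c < i → g k j c = 0 := by
    intro k c hc hjc hci
    by_contra hne
    exact (Finset.min'_le _ c (Finset.mem_filter.mpr ⟨hc, hjc, k, hne⟩)).not_gt hci
  have hcard : (insert j (I.erase i)).card = I.card := by
    rw [Finset.card_insert_of_notMem (fun h => hj (Finset.mem_of_mem_erase h)),
      Finset.card_erase_add_one hi]
  refine tendsto_atTop_mono (fun k => ?_) ((hdich j i hji.1).resolve_left ?_)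
  · rw [← abs_wedgeCoord_insert_erase (hg k) hj hi hji.1 (hgap k)]
    exact abs_wedgeCoord_le_wedgeNorm _ hcard
  · obtain ⟨k, hk⟩ := hji.2
    exact fun h => hk (h k)

variable (g) in
open Classical in
noncomputable def patternEdges : Finset (Fin n × Fin n) :=
  Finset.univ.filter fun p => IsPatternEdge g p.1 p.2

theorem mem_patternEdges {p : Fin n × Fin n} :
    p ∈ patternEdges g ↔ IsPatternEdge g p.1 p.2 := by
  simp [patternEdges]

variable (g) in
noncomputable def patternBalance : LieA n :=
  ⟨WithLp.toLp 2 (edgeBalance (patternEdges g)), sum_edgeBalance_univ _⟩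

theorem one_le_sum_patternBalance (hg : ∀ k, IsUpperUnip (g k))
    (htriv : ∀ t : Fin n → ℝ, (∑ i, t i) = 0 →
      Bornology.IsBounded (Set.range fun k => g k * Matrix.diagonal t * (g k)⁻¹) → t = 0)
    {I : Finset (Fin n)} (hI : IsPatternDownset g I) (hne : I.Nonempty)
    (huniv : I ≠ Finset.univ) :
    1 ≤ ∑ i ∈ I, (patternBalance g : EuclideanSpace ℝ (Fin n)) i := by
  obtain ⟨a, ha, b, hb, hab⟩ := exists_patternEdge_of_isPatternDownset hg htriv hI hne huniv
  exact one_le_sum_edgeBalance (fun p hp => hI p.1 p.2 (mem_patternEdges.mp hp))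
    ⟨(a, b), mem_patternEdges.mpr hab, ha, hb⟩

end Pattern

theorem EuclideanSpace.abs_sum_apply_le {ι : Type*} [Fintype ι] (x : EuclideanSpace ℝ ι)
    (I : Finset ι) : |∑ i ∈ I, x i| ≤ Fintype.card ι * ‖x‖ :=
  calc |∑ i ∈ I, x i| ≤ ∑ i ∈ I, ‖x‖ :=
        (Finset.abs_sum_le_sum_abs _ _).trans (Finset.sum_le_sum fun i _ => PiLp.norm_apply_le x i)
    _ = I.card * ‖x‖ := by rw [Finset.sum_const, nsmul_eq_mul]
    _ ≤ Fintype.card ι * ‖x‖ := by gcongr; exact I.card_le_univ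

section OmegaSet

variable {n : ℕ}

theorem LieA.sum_apply (t : LieA n) : ∑ i, (t : EuclideanSpace ℝ (Fin n)) i = 0 := t.2

theorem isClosed_omegaSet (u : Matrix (Fin n) (Fin n) ℝ) (δ : ℝ) :
    IsClosed (OmegaSet u δ) := by
  simp only [OmegaSet, Set.ofPred_forall]
  refine isClosed_iInter fun I => isClosed_iInter fun _ => isClosed_le continuous_const ?_
  exact continuous_finsetSum _ fun i _ =>
    (EuclideanSpace.proj i).continuous.comp continuous_subtype_val

theorem convex_omegaSet (u : Matrix (Fin n) (Fin n) ℝ) (δ : ℝ) :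
    Convex ℝ (OmegaSet u δ) := by
  intro x hx y hy a b ha hb hab I hI
  have hsum : ∑ i ∈ I, ((a • x + b • y : LieA n) : EuclideanSpace ℝ (Fin n)) i =
      a * ∑ i ∈ I, (x : EuclideanSpace ℝ (Fin n)) i +
        b * ∑ i ∈ I, (y : EuclideanSpace ℝ (Fin n)) i := by
    simp [Finset.sum_add_distrib, Finset.mul_sum]
  rw [hsum, ← one_mul (Real.log δ - _), ← hab, add_mul]
  exact add_le_add (mul_le_mul_of_nonneg_left (hx I hI) ha) (mul_le_mul_of_nonneg_left (hy I hI) hb)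

theorem isBounded_omegaSet (u : Matrix (Fin n) (Fin n) ℝ) (δ : ℝ) :
    Bornology.IsBounded (OmegaSet u δ) := by
  set L : Fin n → ℝ := fun i => Real.log δ - Real.log (wedgeNorm u {i})
  set M := ∑ i, |L i|
  -- each coordinate is bounded below by `L`, hence above since the coordinates sum to `0`
  have hcoord : ∀ t ∈ OmegaSet u δ, ∀ i, |(t : EuclideanSpace ℝ (Fin n)) i| ≤ M := by
    intro t ht i
    have hL : ∀ j, L j ≤ (t : EuclideanSpace ℝ (Fin n)) j := fun j => by
      simpa only [Finset.sum_singleton] using ht {j} (Finset.singleton_nonempty j)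
    have hsplit := Finset.add_sum_erase Finset.univ (fun j => (t : EuclideanSpace ℝ (Fin n)) j)
      (Finset.mem_univ i)
    have hrest : -∑ j ∈ Finset.univ.erase i, |L j| ≤
        ∑ j ∈ Finset.univ.erase i, (t : EuclideanSpace ℝ (Fin n)) j := by
      rw [← Finset.sum_neg_distrib]
      exact Finset.sum_le_sum fun j _ => (neg_abs_le _).trans (hL j)
    have hMi : |L i| + ∑ j ∈ Finset.univ.erase i, |L j| = M :=
      Finset.add_sum_erase Finset.univ (fun j => |L j|) (Finset.mem_univ i)
    have hrest0 : 0 ≤ ∑ j ∈ Finset.univ.erase i, |L j| :=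
      Finset.sum_nonneg fun _ _ => abs_nonneg _
    rw [LieA.sum_apply] at hsplit
    rw [abs_le]
    constructor <;> linarith [neg_abs_le (L i), hL i, abs_nonneg (L i)]
  refine (Metric.isBounded_closedBall (x := 0) (r := √(n * M ^ 2))).subset fun t ht => ?_
  rw [mem_closedBall_zero_iff, show ‖t‖ = ‖(t : EuclideanSpace ℝ (Fin n))‖ from rfl,
    EuclideanSpace.norm_eq]
  refine Real.sqrt_le_sqrt ?_
  calc ∑ i, ‖(t : EuclideanSpace ℝ (Fin n)) i‖ ^ 2 ≤ ∑ _i : Fin n, M ^ 2 :=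
        Finset.sum_le_sum fun i _ => pow_le_pow_left₀ (norm_nonneg _) (hcoord t ht i) 2
    _ = n * M ^ 2 := by simp

theorem closedBall_subset_omegaSet {u : Matrix (Fin n) (Fin n) ℝ} {δ : ℝ}
    (huniv : Real.log δ ≤ Real.log (wedgeNorm u Finset.univ)) {c : LieA n} {r : ℝ}
    (h : ∀ I : Finset (Fin n), I.Nonempty → I ≠ Finset.univ →
      Real.log δ - Real.log (wedgeNorm u I) + n * r ≤
        ∑ i ∈ I, (c : EuclideanSpace ℝ (Fin n)) i) :
    Metric.closedBall c r ⊆ OmegaSet u δ := by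
  intro t ht I hI
  by_cases hIu : I = Finset.univ
  · subst hIu
    rw [LieA.sum_apply]
    linarith
  · have hdiff := abs_le.mp
      (EuclideanSpace.abs_sum_apply_le ((t - c : LieA n) : EuclideanSpace ℝ (Fin n)) I)
    have hnorm : n * ‖(t : EuclideanSpace ℝ (Fin n)) - c‖ ≤ n * r :=
      mul_le_mul_of_nonneg_left (mem_closedBall_iff_norm.mp ht) (Nat.cast_nonneg n)
    simp only [Submodule.coe_sub, PiLp.sub_apply, Finset.sum_sub_distrib, Fintype.card_fin] at hdiff
    linarith [h I hI hIu, hdiff.1]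

end OmegaSet

section MinkowskiContent

open Metric

variable {E : Type*} [NormedAddCommGroup E] [NormedSpace ℝ E] [MeasurableSpace E]
  [FiniteDimensional ℝ E] (μ : Measure E) [μ.IsAddHaarMeasure]

theorem nonneg_of_tendsto_minkowski {K : Set E} (hK : IsCompact K) {S : ℝ}
    (hS : Tendsto (fun ε : ℝ => ((μ (K + closedBall 0 ε)).toReal - (μ K).toReal) / ε)
      (𝓝[>] 0) (𝓝 S)) : 0 ≤ S := by
  refine ge_of_tendsto hS ?_
  filter_upwards [self_mem_nhdsWithin] with ε (hε : 0 < ε)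
  refine div_nonneg (sub_nonneg.mpr ?_) hε.le
  exact ENNReal.toReal_mono (hK.add (isCompact_closedBall 0 ε)).measure_lt_top.ne
    (measure_mono (Set.subset_add_left K (mem_closedBall_self hε.le)))

variable [BorelSpace E]

/-- The `ε`-neighbourhood of a convex body containing `closedBall c r` lies in its image under
the homothety of centre `c` and ratio `1 + ε / r`. -/
theorem measure_add_closedBall_le {K : Set E} (hK : Convex ℝ K) {c : E} {r ε : ℝ} (hr : 0 < r)
    (hε : 0 < ε) (hball : closedBall c r ⊆ K) :
    μ (K + closedBall 0 ε) ≤ ENNReal.ofReal ((1 + ε / r) ^ Module.finrank ℝ E) * μ K := by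
  set l := 1 + ε / r
  have hl : 1 < l := lt_add_of_pos_right 1 (div_pos hε hr)
  have hsub : K + closedBall 0 ε ⊆ AffineMap.homothety c l '' K := by
    rintro _ ⟨a, ha, b, hb, rfl⟩
    have hb' : c + (r / ε) • b ∈ K := hball <| by
      rw [mem_closedBall_zero_iff] at hb
      rw [mem_closedBall, dist_eq_norm, add_sub_cancel_left, norm_smul, Real.norm_of_nonneg
        (div_pos hr hε).le, div_mul_eq_mul_div, div_le_iff₀ hε]
      exact mul_le_mul_of_nonneg_left hb hr.le
    refine ⟨l⁻¹ • a + (1 - l⁻¹) • (c + (r / ε) • b),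
      hK ha hb' (inv_nonneg.mpr (by linarith)) (sub_nonneg.mpr (inv_le_one_of_one_le₀ hl.le))
        (by ring), ?_⟩
    rw [AffineMap.homothety_apply, vsub_eq_sub, vadd_eq_add]
    have hl0 : l ≠ 0 := by positivity
    have : (1 - l⁻¹) * (r / ε) = l⁻¹ := by
      simp only [l]; field_simp; ring
    simp only [smul_add, smul_sub, smul_smul, mul_sub, mul_inv_cancel₀ hl0, this]
    module
  calc μ (K + closedBall 0 ε) ≤ μ (AffineMap.homothety c l '' K) := measure_mono hsub
    _ = _ := by rw [Measure.addHaar_image_homothety, abs_of_pos (pow_pos (zero_lt_one.trans hl) _)]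


theorem tendsto_one_add_div_pow_sub_one_div (d : ℕ) {r : ℝ} :
    Tendsto (fun ε : ℝ => ((1 + ε / r) ^ d - 1) / ε) (𝓝[>] 0) (𝓝 (d / r)) := by
  have hderiv : HasDerivAt (fun x : ℝ => (1 + x / r) ^ d) (d / r) 0 := by
    simpa [div_eq_mul_inv] using (((hasDerivAt_id (0 : ℝ)).div_const r).const_add 1).fun_pow d
  refine ((hasDerivAt_iff_tendsto_slope.mp hderiv).mono_left (nhdsGT_le_nhdsNE 0)).congr
    fun ε => ?_
  simp [slope_def_field]

theorem div_measure_le_of_tendsto_minkowski {K : Set E} (hK : Convex ℝ K) (hKc : IsCompact K)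
    {c : E} {r : ℝ} (hr : 0 < r) (hball : closedBall c r ⊆ K) {S : ℝ}
    (hS : Tendsto (fun ε : ℝ => ((μ (K + closedBall 0 ε)).toReal - (μ K).toReal) / ε)
      (𝓝[>] 0) (𝓝 S)) :
    S / (μ K).toReal ≤ Module.finrank ℝ E / r := by
  set d := Module.finrank ℝ E
  have hfin : μ K ≠ ⊤ := hKc.measure_lt_top.ne
  have hpos : 0 < (μ K).toReal := ENNReal.toReal_pos
    ((measure_closedBall_pos μ c hr).trans_le (measure_mono hball)).ne' hfin
  have hbound : ∀ᶠ ε in 𝓝[>] 0, ((μ (K + closedBall 0 ε)).toReal - (μ K).toReal) / ε ≤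
      ((1 + ε / r) ^ d - 1) / ε * (μ K).toReal := by
    filter_upwards [self_mem_nhdsWithin] with ε (hε : 0 < ε)
    have h := ENNReal.toReal_mono (ENNReal.mul_ne_top ENNReal.ofReal_ne_top hfin)
      (measure_add_closedBall_le μ hK hr hε hball)
    rw [ENNReal.toReal_mul, ENNReal.toReal_ofReal (by positivity)] at h
    rw [div_mul_eq_mul_div, sub_mul, one_mul]
    gcongr
  rw [div_le_iff₀ hpos]
  exact le_of_tendsto_of_tendsto hS
    ((tendsto_one_add_div_pow_sub_one_div d).mul_const _) hbound

end MinkowskiContent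

theorem eventually_closedBall_subset_omegaSet {n : ℕ} {g : ℕ → Matrix (Fin n) (Fin n) ℝ}
    (hg : ∀ k, IsUpperUnip (g k))
    (hdich : ∀ i j : Fin n, i < j →
      (∀ k, g k i j = 0) ∨ Tendsto (fun k => |g k i j|) atTop atTop)
    (htriv : ∀ t : Fin n → ℝ, (∑ i, t i) = 0 →
      Bornology.IsBounded (Set.range fun k => g k * Matrix.diagonal t * (g k)⁻¹) → t = 0)
    {δ : ℝ} (hδ0 : 0 < δ) (hδ1 : δ < 1) {R : ℝ} (hR : 0 ≤ R) :
    ∀ᶠ k in atTop,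
      Metric.closedBall (((n : ℝ) * R) • patternBalance g) R ⊆ OmegaSet (g k) δ := by
  classical
  set b : Fin n → ℝ := fun i => (patternBalance g : EuclideanSpace ℝ (Fin n)) i
  set C := ∑ i, |b i|
  have hlogδ : Real.log δ ≤ 0 := Real.log_nonpos hδ0.le hδ1.le
  have hnR : 0 ≤ n * R := by positivity
  have hfar : ∀ᶠ k in atTop, ∀ I ∈ Finset.univ.filter fun I => ¬ IsPatternDownset g I,
      n * R * (1 + C) ≤ Real.log (wedgeNorm (g k) I) :=
    (Filter.eventually_all_finset _).mpr fun I hI =>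
      (Real.tendsto_log_atTop.comp (tendsto_wedgeNorm_atTop_of_not_isPatternDownset hg hdich
        (Finset.mem_filter.mp hI).2)).eventually_ge_atTop _
  filter_upwards [hfar] with k hk
  refine closedBall_subset_omegaSet
    (hlogδ.trans (Real.log_nonneg (one_le_wedgeNorm (hg k) _))) fun I hne huniv => ?_
  have hsum :
      ∑ i ∈ I, ((((n : ℝ) * R) • patternBalance g : LieA n) : EuclideanSpace ℝ (Fin n)) i =
        n * R * ∑ i ∈ I, b i := by
    simp [b, Finset.mul_sum]
  rw [hsum]
  have hW := Real.log_nonneg (one_le_wedgeNorm (hg k) I)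
  by_cases hI : IsPatternDownset g I
  · have := one_le_sum_patternBalance hg htriv hI hne huniv
    nlinarith
  · have hbig := hk I (Finset.mem_filter.mpr ⟨Finset.mem_univ _, hI⟩)
    have hC : -C ≤ ∑ i ∈ I, b i := neg_le_of_abs_le <| (Finset.abs_sum_le_sum_abs _ _).trans
      (Finset.sum_le_sum_of_subset_of_nonneg I.subset_univ fun _ _ _ => abs_nonneg _)
    nlinarith

/-- **Proposition (p53).** Let `{g_k}` be a sequence of upper triangular unipotent matrices
satisfying the dichotomy condition and with `𝒜(A,{g_k}) = {0}`.  Then for `0 < δ < 1`,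
`Area(∂Ω_{g_k,δ}) / Vol(Ω_{g_k,δ}) → 0` as `k → ∞`, where `Vol` is Lebesgue measure on the
hyperplane `Lie(A)` and `Area(∂·)` is outer Minkowski content within this hyperplane. -/
theorem stmt_14 {n : ℕ} (g : ℕ → Matrix (Fin n) (Fin n) ℝ)
    (hg : ∀ k, IsUpperUnip (g k))
    (hdich : ∀ i j : Fin n, i < j →
      (∀ k, g k i j = 0) ∨ Tendsto (fun k => |g k i j|) atTop atTop)
    (htriv : ∀ t : Fin n → ℝ, (∑ i, t i) = 0 →
      Bornology.IsBounded (Set.range fun k => g k * Matrix.diagonal t * (g k)⁻¹) → t = 0)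
    {δ : ℝ} (hδ0 : 0 < δ) (hδ1 : δ < 1)
    -- `S k` is the outer Minkowski content of `∂Ω_{g_k,δ}` within the hyperplane `Lie(A)`
    (S : ℕ → ℝ)
    (hS : ∀ k, Tendsto
      (fun ε : ℝ =>
        ((volume (OmegaSet (g k) δ + Metric.closedBall (0 : LieA n) ε)).toReal -
          (volume (OmegaSet (g k) δ)).toReal) / ε)
      (𝓝[>] 0) (𝓝 (S k))) :
    Tendsto (fun k => S k / (volume (OmegaSet (g k) δ)).toReal) atTop (𝓝 0) := by
  have hcompact : ∀ k, IsCompact (OmegaSet (g k) δ) := fun k =>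
    Metric.isCompact_of_isClosed_isBounded (isClosed_omegaSet _ _) (isBounded_omegaSet _ _)
  have hnonneg : ∀ k, 0 ≤ S k / (volume (OmegaSet (g k) δ)).toReal := fun k =>
    div_nonneg (nonneg_of_tendsto_minkowski volume (hcompact k) (hS k)) ENNReal.toReal_nonneg
  set d : ℕ := Module.finrank ℝ (LieA n)
  refine tendsto_order.mpr ⟨fun a ha => Eventually.of_forall fun k => ha.trans_le (hnonneg k),
    fun ε hε => ?_⟩
  have hR : 0 < (d + 1) / ε := by positivity
  filter_upwards [eventually_closedBall_subset_omegaSet hg hdich htriv hδ0 hδ1 hR.le] with k hk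
  calc S k / (volume (OmegaSet (g k) δ)).toReal ≤ d / ((d + 1) / ε) :=
        div_measure_le_of_tendsto_minkowski volume (convex_omegaSet _ _) (hcompact k) hR hk (hS k)
    _ < ε := by
      rw [div_div_eq_mul_div, div_lt_iff₀ (by positivity)]
      linarith
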